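/- arXiv:1410.2145 — 4 statements merged into one kernel-verified Lean document; each statement's English description precedes it below -/
import Mathlib

section
/- For all positive integers a, b, n with b ≥ 2 and b not dividing na, the fractional part {na/b} equals 1/2 - (1/(2b)) · Σ_{m=1}^{b-1} cot(πm/b) · sin(2πmn·a/b). -/
/-!
Write `n * a = q * b + r` with `0 < r < b`; then `{n a / b} = r / b` and the sine factors only
depend on `r`. Telescoping `cot θ · sin 2rθ = Σ_{j<r} (cos 2jθ + cos 2(j+1)θ)` reduces the sum over
`m` to character sums `Σ_{m=1}^{b-1} cos (2π m j / b)`, which equal `b - 1` for `j = 0` and `-1`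
for `0 < j < b`. Hence the cotangent sum is `b - 2r`.
-/

open Real Finset

theorem sum_range_cos_two_pi_mul_div_eq_zero {b j : ℕ} (h : ¬ b ∣ j) :
    ∑ m ∈ range b, cos (2 * π * m * j / b) = 0 := by
  rcases Nat.eq_zero_or_pos b with rfl | hb
  · simp
  have hζ := Complex.isPrimitiveRoot_exp b hb.ne'
  have hζj : Complex.exp (2 * π * Complex.I / b) ^ j ≠ 1 := fun h1 =>
    h ((hζ.pow_eq_one_iff_dvd j).mp h1)
  have hgeom : ∑ m ∈ range b, (Complex.exp (2 * π * Complex.I / b) ^ j) ^ m = 0 := by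
    rw [geom_sum_eq hζj, ← pow_mul, mul_comm j b, pow_mul, hζ.pow_eq_one, one_pow, sub_self,
      zero_div]
  have hre (m : ℕ) :
      ((Complex.exp (2 * π * Complex.I / b) ^ j) ^ m).re = cos (2 * π * m * j / b) := by
    rw [← pow_mul, ← Complex.exp_nat_mul, ← Complex.exp_ofReal_mul_I_re]
    congr 2
    push_cast
    ring
  simpa only [Complex.re_sum, hre, Complex.zero_re] using congrArg Complex.re hgeom

theorem sum_Icc_cos_two_pi_mul_div_eq_neg_one {b j : ℕ} (hb : 0 < b) (h : ¬ b ∣ j) :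
    ∑ m ∈ Icc 1 (b - 1), cos (2 * π * m * j / b) = -1 := by
  have := sum_range_cos_two_pi_mul_div_eq_zero h
  rw [Nat.range_eq_Icc_zero_sub_one b hb.ne', ← add_sum_Ioc_eq_sum_Icc (Nat.zero_le _),
    ← Icc_add_one_left_eq_Ioc] at this
  simp only [Nat.cast_zero, mul_zero, zero_mul, zero_div, cos_zero] at this
  linarith

theorem cot_mul_sin_two_mul_nat_mul {θ : ℝ} (hθ : sin θ ≠ 0) (k : ℕ) :
    cot θ * sin (2 * k * θ) = ∑ j ∈ range k, (cos (2 * j * θ) + cos (2 * (j + 1) * θ)) := by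
  induction k with
  | zero => simp
  | succ k ih =>
    rw [sum_range_succ, ← ih, Nat.cast_succ,
      show 2 * ((k : ℝ) + 1) * θ = 2 * k * θ + 2 * θ by ring, sin_add, cos_add, cot_eq_cos_div_sin,
      sin_two_mul, cos_two_mul']
    field_simp
    linear_combination (cos θ * sin (2 * k * θ) + sin θ * cos (2 * k * θ)) * sin_sq_add_cos_sq θ

theorem sin_pi_mul_div_ne_zero {m b : ℕ} (hm : 0 < m) (hmb : m < b) : sin (π * m / b) ≠ 0 := by
  have hm' : (0 : ℝ) < m := by exact_mod_cast hm
  have hmb' : (m : ℝ) < b := by exact_mod_cast hmb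
  refine (sin_pos_of_pos_of_lt_pi (div_pos (mul_pos pi_pos hm') (hm'.trans hmb')) ?_).ne'
  rw [div_lt_iff₀ (hm'.trans hmb'), mul_lt_mul_iff_right₀ pi_pos]
  exact hmb'

theorem sum_Icc_cot_mul_sin_two_pi_mul_div {b r : ℕ} (hr : 0 < r) (hrb : r < b) :
    ∑ m ∈ Icc 1 (b - 1), cot (π * m / b) * sin (2 * π * m * r / b) = b - 2 * r := by
  set C : ℕ → ℝ := fun j => ∑ m ∈ Icc 1 (b - 1), cos (2 * π * m * j / b)
  have hC0 : C 0 = b - 1 := by simp [C, Nat.cast_sub (hr.trans hrb)]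
  have hC (j : ℕ) (hj : 0 < j) (hjb : j < b) : C j = -1 :=
    sum_Icc_cos_two_pi_mul_div_eq_neg_one (hj.trans hjb) (Nat.not_dvd_of_pos_of_lt hj hjb)
  have hterm : ∀ m ∈ Icc 1 (b - 1), cot (π * m / b) * sin (2 * π * m * r / b) =
      ∑ j ∈ range r, (cos (2 * π * m * j / b) + cos (2 * π * m * (j + 1 : ℕ) / b)) := by
    intro m hm
    rw [mem_Icc] at hm
    rw [show 2 * π * m * r / b = 2 * r * (π * m / b) by ring,
      cot_mul_sin_two_mul_nat_mul (sin_pi_mul_div_ne_zero hm.1 (by omega))]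
    refine sum_congr rfl fun j _ => ?_
    push_cast
    ring_nf
  obtain ⟨s, rfl⟩ : ∃ s, r = s + 1 := ⟨r - 1, by omega⟩
  calc _ = ∑ j ∈ range (s + 1), (C j + C (j + 1)) := by
        rw [sum_congr rfl hterm, sum_comm]
        simp only [C, sum_add_distrib]
    _ = C 0 + 2 * ∑ j ∈ range s, C (j + 1) + C (s + 1) := by
        rw [sum_add_distrib, sum_range_succ', sum_range_succ]
        ring
    _ = b - 2 * (s + 1 : ℕ) := by
        rw [sum_congr rfl fun j hj => hC (j + 1) j.succ_pos (by simp at hj; omega), hC0,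
          hC (s + 1) s.succ_pos hrb, sum_const, card_range, nsmul_eq_mul]
        push_cast
        ring

theorem sin_two_pi_mul_div_mod (m k b : ℕ) :
    sin (2 * π * m * (k % b : ℕ) / b) = sin (2 * π * m * k / b) := by
  rcases Nat.eq_zero_or_pos b with rfl | hb
  · simp
  have hk : (k : ℝ) = (k % b : ℕ) + b * (k / b : ℕ) := by exact_mod_cast (Nat.mod_add_div k b).symm
  rw [hk, ← sin_add_nat_mul_two_pi _ (m * (k / b))]
  congr 1
  field_simp
  push_cast
  ring

theorem fract_eq_cot_sum_general (a b n : ℕ) (hb : 2 ≤ b)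
    (hnd : ¬ b ∣ n * a) :
    Int.fract ((n * a : ℝ) / b) =
      1 / 2 - (1 / (2 * b)) * ∑ m ∈ Finset.Icc 1 (b - 1),
        Real.cot (π * m / b) * Real.sin (2 * π * m * n * (a / b)) := by
  have hr : 0 < n * a % b := Nat.pos_of_ne_zero fun h => hnd (Nat.dvd_of_mod_eq_zero h)
  have hrb : n * a % b < b := Nat.mod_lt _ (by omega)
  have hsin (m : ℕ) : sin (2 * π * m * n * (a / b)) = sin (2 * π * m * (n * a % b : ℕ) / b) := by
    rw [sin_two_pi_mul_div_mod]
    push_cast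
    ring_nf
  simp_rw [hsin, sum_Icc_cot_mul_sin_two_pi_mul_div hr hrb, ← Nat.cast_mul,
    Int.fract_div_natCast_eq_div_natCast_mod]
  field_simp
  ring

theorem fract_eq_cot_sum (a b n : ℕ) (ha : 0 < a) (hn : 0 < n) (hb : 2 ≤ b)
    (hnd : ¬ b ∣ n * a) :
    Int.fract ((n * a : ℝ) / b) =
      1 / 2 - (1 / (2 * b)) * ∑ m ∈ Finset.Icc 1 (b - 1),
        Real.cot (π * m / b) * Real.sin (2 * π * m * n * (a / b)) :=
  fract_eq_cot_sum_general a b n hb hnd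
end

section
/- For positive integers r, b with (r,b)=1 and b ≥ 2, the cotangent sum satisfies c₀(r/b) = (1/r)·c₀(1/b) - (1/r)·Q(r/b), where Q(r/b) = Σ_{m=1}^{b-1} cot(πmr/b)·⌊rm/b⌋. -/
open Real Finset

/-- The cotangent sum `c₀(r/b) = -∑_{m=1}^{b-1} (m/b)·cot(πmr/b)`. -/
noncomputable def c₀ (r b : ℕ) : ℝ :=
  -∑ m ∈ Finset.Icc 1 (b - 1), (m / b : ℝ) * Real.cot (π * m * r / b)

/-- `Q(r/b) = ∑_{m=1}^{b-1} cot(πmr/b)·⌊rm/b⌋`. -/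
noncomputable def Qsum (r b : ℕ) : ℝ :=
  ∑ m ∈ Finset.Icc 1 (b - 1), Real.cot (π * m * r / b) * (⌊(r * m : ℝ) / b⌋ : ℝ)

lemma cot_add_nat_mul_pi (x : ℝ) (n : ℕ) : Real.cot (x + n * π) = Real.cot x := by
  rw [Real.cot_eq_cos_div_sin, Real.cot_eq_cos_div_sin,
    Real.cos_antiperiodic.add_nat_mul_eq, Real.sin_antiperiodic.add_nat_mul_eq,
    mul_div_mul_left]
  positivity

/-- periodicity: cot(π m r / b) = cot(π (r m % b) / b) -/
lemma cot_mod_eq (r b m : ℕ) (hb : 0 < b) :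
    Real.cot (π * m * r / b) = Real.cot (π * ((r * m % b : ℕ) : ℝ) / b) := by
  have hb' : (b : ℝ) ≠ 0 := by positivity
  have h : r * m = b * (r * m / b) + r * m % b := (Nat.div_add_mod (r * m) b).symm
  have hR : (r : ℝ) * m = (b : ℝ) * ((r * m / b : ℕ) : ℝ) + ((r * m % b : ℕ) : ℝ) := by
    exact_mod_cast congrArg (Nat.cast : ℕ → ℝ) h
  have heq : (π * m * r / b : ℝ) = π * ((r * m % b : ℕ) : ℝ) / b + ((r * m / b : ℕ) : ℝ) * π := by
    rw [div_add' _ _ _ hb', div_eq_div_iff hb' hb']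
    linear_combination (π * (b : ℝ)) * hR
  rw [heq, cot_add_nat_mul_pi]

lemma floor_eq (r b m : ℕ) (hb : 0 < b) :
    (⌊(r * m : ℝ) / b⌋ : ℝ) = ((r * m / b : ℕ) : ℝ) := by
  have h0 : (0:ℝ) ≤ (r * m : ℝ) / b := by positivity
  rw [← natCast_floor_eq_intCast_floor h0]
  norm_cast
  exact Nat.floor_div_eq_div _ _

theorem c₀_eq_c₀_one_sub_Q (r b : ℕ) (hr : 0 < r) (hb : 2 ≤ b)
    (hrb : Nat.Coprime r b) :
    c₀ r b = (1 / r) * c₀ 1 b - (1 / r) * Qsum r b := by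
  have hb0 : 0 < b := by omega
  have hbR : (b:ℝ) ≠ 0 := by positivity
  have hrR : (r:ℝ) ≠ 0 := by positivity
  have hmaps : ∀ m ∈ Finset.Icc 1 (b-1), r * m % b ∈ Finset.Icc 1 (b-1) := by
    intro m hm
    simp only [Finset.mem_Icc] at hm ⊢
    have hlt : r * m % b < b := Nat.mod_lt _ hb0
    have hne : r * m % b ≠ 0 := by
      intro h
      have hdvd : b ∣ r * m := Nat.dvd_of_mod_eq_zero h
      have : b ∣ m := Nat.Coprime.dvd_of_dvd_mul_left (hrb.symm) hdvd
      have := Nat.le_of_dvd (by omega) this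
      omega
    omega
  have hinj : ∀ m₁ ∈ Finset.Icc 1 (b-1), ∀ m₂ ∈ Finset.Icc 1 (b-1),
      r * m₁ % b = r * m₂ % b → m₁ = m₂ := by
    intro m₁ hm₁ m₂ hm₂ h
    simp only [Finset.mem_Icc] at hm₁ hm₂
    have : m₁ ≡ m₂ [MOD b] := Nat.ModEq.cancel_left_of_coprime (by
      simpa [Nat.coprime_comm] using hrb) h
    exact this.eq_of_lt_of_lt (by omega) (by omega)
  have hbij : ∑ m ∈ Finset.Icc 1 (b-1),
        ((r * m % b : ℕ) : ℝ)/b * Real.cot (π * ((r * m % b : ℕ) : ℝ) / b)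
      = ∑ k ∈ Finset.Icc 1 (b-1), (k : ℝ)/b * Real.cot (π * (k : ℝ) / b) := by
    apply Finset.sum_bij (fun m _ => r * m % b)
    · exact hmaps
    · exact fun a₁ ha₁ a₂ ha₂ h => hinj a₁ ha₁ a₂ ha₂ h
    · intro k hk
      obtain ⟨a, ha, hak⟩ := Finset.surj_on_of_inj_on_of_card_le
        (fun m _ => r * m % b) hmaps (fun a₁ a₂ h₁ h₂ h => hinj a₁ h₁ a₂ h₂ h) le_rfl k hk
      exact ⟨a, ha, hak.symm⟩
    · intro m hm; rfl
  have expand : ∀ m ∈ Finset.Icc 1 (b-1),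
      (r:ℝ) * ((m:ℝ)/b * Real.cot (π * m * r / b)) =
      ((r * m % b : ℕ) : ℝ)/b * Real.cot (π * ((r * m % b : ℕ) : ℝ) / b)
        + Real.cot (π * m * r / b) * (⌊(r * m : ℝ) / b⌋ : ℝ) := by
    intro m hm
    rw [floor_eq r b m hb0, cot_mod_eq r b m hb0]
    have h : r * m = b * (r * m / b) + r * m % b := (Nat.div_add_mod (r * m) b).symm
    have hR : (r : ℝ) * m = (b : ℝ) * ((r * m / b : ℕ) : ℝ) + ((r * m % b : ℕ) : ℝ) := by
      exact_mod_cast congrArg (Nat.cast : ℕ → ℝ) h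
    field_simp
    linear_combination Real.cot (π * ((r * m % b : ℕ) : ℝ) / b) * hR
  have key : (r:ℝ) * c₀ r b = c₀ 1 b - Qsum r b := by
    rw [c₀, c₀, Qsum, mul_neg, Finset.mul_sum]
    rw [Finset.sum_congr rfl expand, Finset.sum_add_distrib, hbij]
    have h1 : ∑ m ∈ Finset.Icc 1 (b-1), (m:ℝ)/b * Real.cot (π * m * (1:ℕ) / b)
        = ∑ k ∈ Finset.Icc 1 (b-1), (k:ℝ)/b * Real.cot (π * (k:ℝ) / b) := by
      apply Finset.sum_congr rfl; intro k _; norm_num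
    rw [h1]; ring
  field_simp
  linear_combination key
end

section
/- Let f be (2N+1) times continuously differentiable on [0,Z] for an integer Z ≥ 0. Then Σ_{ν=0}^{Z} f(ν) = (f(0)+f(Z))/2 + ∫₀^Z f(u)du + Σ_{j=1}^{N} (B_{2j}/(2j)!)·(f^{(2j-1)}(Z) - f^{(2j-1)}(0)) + (1/(2N+1)!)·∫₀^Z (Σ_{j=0}^{2N+1} C(2N+1,j)·(u-⌊u⌋)^j·B_{2N+1-j})·f^{(2N+1)}(u)du, where B_m are the Bernoulli numbers. -/
/-!
Integrate by parts against the periodic Bernoulli functions `B_m({u})` on each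
`[k, k + 1]`. Since `B_{m+1}' = (m + 1) B_m`, the remainder
`R_m = (1/m!) ∫₀^Z B_m({u}) f⁽ᵐ⁾(u) du` satisfies
`R_m = B_{m+1}/(m+1)! · (f⁽ᵐ⁾(Z) - f⁽ᵐ⁾(0)) - R_{m+1}` for `m ≥ 1`: the boundary terms
telescope because `B_{m+1}(1) = B_{m+1}(0)`. For `m = 0` the jump of `B_1({u})` at the
integers instead produces `∑ f(ν)` together with the trapezoidal correction. Taking two steps
at a time, the odd Bernoulli numbers vanish and only the even ones remain.
-/

open Finset intervalIntegral Set MeasureTheory Nat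

theorem bernoulliFun_eq_sum (m : ℕ) (x : ℝ) :
    bernoulliFun m x =
      ∑ j ∈ range (m + 1), (m.choose j : ℝ) * x ^ j * (bernoulli (m - j) : ℝ) := by
  simp only [bernoulliFun, Polynomial.bernoulli_def, Polynomial.eval_map_algebraMap, map_sum,
    Polynomial.aeval_monomial, eq_ratCast, Rat.cast_mul, Rat.cast_natCast]
  refine sum_congr rfl fun j _ => ?_
  ring

theorem Int.fract_eqOn_uIoo (k : ℤ) :
    EqOn Int.fract (fun u : ℝ => u - k) (uIoo (k : ℝ) (k + 1)) := by
  intro u hu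
  rw [uIoo_of_le (by linarith)] at hu
  rw [← Int.self_sub_floor, Int.floor_eq_on_Ico k u (Ioo_subset_Ico_self hu)]

section UnitInterval

variable {g g' : ℝ → ℝ}

theorem intervalIntegrable_bernoulliFun_fract_mul (m : ℕ) (k : ℤ)
    (hg : IntervalIntegrable g volume k (k + 1)) :
    IntervalIntegrable (fun u => bernoulliFun m (Int.fract u) * g u) volume k (k + 1) := by
  have hB : Continuous fun u => bernoulliFun m (u - k) := by fun_prop
  refine (hg.continuousOn_mul hB.continuousOn).congr_uIoo fun u hu => ?_
  simp only [Int.fract_eqOn_uIoo k hu]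

theorem integral_bernoulliFun_fract_mul_eq_sub_intCast (m : ℕ) (k : ℤ) (g : ℝ → ℝ) :
    ∫ u in (k : ℝ)..k + 1, bernoulliFun m (Int.fract u) * g u =
      ∫ u in (k : ℝ)..k + 1, bernoulliFun m (u - k) * g u :=
  integral_congr_uIoo fun u hu => by simp only [Int.fract_eqOn_uIoo k hu]

theorem integral_bernoulliFun_fract_mul_deriv_unit (m : ℕ) (k : ℤ)
    (hg : ContinuousOn g (Icc k (k + 1)))
    (hderiv : ∀ x ∈ Ioo (k : ℝ) (k + 1), HasDerivAt g (g' x) x)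
    (hg' : IntervalIntegrable g' volume k (k + 1)) :
    ∫ u in (k : ℝ)..k + 1, bernoulliFun (m + 1) (Int.fract u) * g' u =
      bernoulliFun (m + 1) 1 * g (k + 1) - bernoulli (m + 1) * g k
        - (m + 1) * ∫ u in (k : ℝ)..k + 1, bernoulliFun m (Int.fract u) * g u := by
  have hk : (k : ℝ) ≤ k + 1 := by linarith
  have hB (n : ℕ) : Continuous fun u => bernoulliFun n (u - k) := by fun_prop
  rw [integral_bernoulliFun_fract_mul_eq_sub_intCast,
    integral_bernoulliFun_fract_mul_eq_sub_intCast,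
    integral_mul_deriv_eq_deriv_mul_of_hasDerivAt
      (u' := fun u => (m + 1) * bernoulliFun m (u - k))
      (hB _).continuousOn (by rwa [uIcc_of_le hk]) _ (by rwa [min_eq_left hk, max_eq_right hk])
      (((hB m).const_mul _).intervalIntegrable _ _) hg']
  · simp only [add_sub_cancel_left, sub_self, bernoulliFun_eval_zero, mul_assoc,
      intervalIntegral.integral_const_mul]
  · intro x _
    simpa using (hasDerivAt_bernoulliFun (m + 1) (x - k)).comp_sub_const x (k : ℝ)

end UnitInterval

section NatInterval

variable {g g' : ℝ → ℝ} (Z : ℕ)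
  (hg : ContinuousOn g (Icc 0 Z)) (hderiv : ∀ x ∈ Ioo (0 : ℝ) Z, HasDerivAt g (g' x) x)
  (hg' : IntervalIntegrable g' volume 0 Z)
include hg hderiv hg'

theorem integral_bernoulliFun_fract_mul_deriv (m : ℕ) :
    ∫ u in (0 : ℝ)..Z, bernoulliFun (m + 1) (Int.fract u) * g' u =
      ∑ k ∈ range Z, (bernoulliFun (m + 1) 1 * g (k + 1) - bernoulli (m + 1) * g k)
        - (m + 1) * ∫ u in (0 : ℝ)..Z, bernoulliFun m (Int.fract u) * g u := by
  have hsub {k : ℕ} (hk : k < Z) : Icc (k : ℝ) (k + 1) ⊆ Icc 0 Z :=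
    Icc_subset_Icc (by positivity) (by exact_mod_cast hk)
  have hsub' {k : ℕ} (hk : k < Z) : uIcc (k : ℝ) (k + 1) ⊆ uIcc 0 Z := by
    rw [Set.uIcc_of_le (by linarith), Set.uIcc_of_le (by positivity)]
    exact hsub hk
  have hint (n : ℕ) {h : ℝ → ℝ} (hh : IntervalIntegrable h volume 0 Z) (k : ℕ) (hk : k < Z) :
      IntervalIntegrable (fun u => bernoulliFun n (Int.fract u) * h u) volume k ↑(k + 1) := by
    simpa using intervalIntegrable_bernoulliFun_fract_mul n k
      (by simpa using hh.mono_set (hsub' hk))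
  rw [← Nat.cast_zero, ← sum_integral_adjacent_intervals (hint (m + 1) hg'),
    ← sum_integral_adjacent_intervals (hint m (hg.intervalIntegrable_of_Icc (by positivity))),
    mul_sum, ← sum_sub_distrib]
  refine sum_congr rfl fun k hk => ?_
  have hk := mem_range.mp hk
  simpa using integral_bernoulliFun_fract_mul_deriv_unit m k (g := g) (g' := g')
    (by simpa using hg.mono (hsub hk))
    (by simpa using fun x hx =>
      hderiv x (Ioo_subset_Ioo (by positivity) (by exact_mod_cast hk) hx))
    (by simpa using hg'.mono_set (hsub' hk))

theorem integral_bernoulliFun_one_fract_mul_deriv :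
    ∫ u in (0 : ℝ)..Z, bernoulliFun 1 (Int.fract u) * g' u =
      ∑ ν ∈ range (Z + 1), g ν - (g 0 + g Z) / 2 - ∫ u in (0 : ℝ)..Z, g u := by
  have hsum := integral_bernoulliFun_fract_mul_deriv Z hg hderiv hg' 0
  simp only [zero_add, bernoulliFun_zero, one_mul, CharP.cast_eq_zero] at hsum
  rw [hsum, bernoulliFun_one, bernoulli_one, sum_sub_distrib, ← mul_sum, ← mul_sum]
  have h1 := sum_range_succ (fun ν : ℕ => g ν) Z
  have h2 := sum_range_succ' (fun ν : ℕ => g ν) Z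
  push_cast at h1 h2 ⊢
  linear_combination (-1 / 2 : ℝ) * h1 - (1 / 2 : ℝ) * h2

theorem integral_bernoulliFun_fract_mul_deriv_of_ne_zero {m : ℕ} (hm : m ≠ 0) :
    ∫ u in (0 : ℝ)..Z, bernoulliFun (m + 1) (Int.fract u) * g' u =
      bernoulli (m + 1) * (g Z - g 0)
        - (m + 1) * ∫ u in (0 : ℝ)..Z, bernoulliFun m (Int.fract u) * g u := by
  have htelescope := sum_range_sub (fun k : ℕ => (bernoulli (m + 1) : ℝ) * g k) Z
  push_cast at htelescope
  rw [integral_bernoulliFun_fract_mul_deriv Z hg hderiv hg',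
    bernoulliFun_endpoints_eq_of_ne_one (by omega), bernoulliFun_eval_zero, htelescope, mul_sub]

end NatInterval

section IteratedDerivWithinIcc

variable {f : ℝ → ℝ} {n : WithTop ℕ∞} {m : ℕ} {a b : ℝ}

theorem ContDiffOn.continuousOn_iteratedDerivWithin_Icc (hf : ContDiffOn ℝ n f (Icc a b))
    (hm : m ≤ n) : ContinuousOn (iteratedDerivWithin m f (Icc a b)) (Icc a b) := by
  rcases lt_or_ge a b with hab | hab
  · exact hf.continuousOn_iteratedDerivWithin hm (uniqueDiffOn_Icc hab)
  · exact (subsingleton_Icc_of_ge hab).continuousOn _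

theorem ContDiffOn.hasDerivAt_iteratedDerivWithin_Icc (hf : ContDiffOn ℝ n f (Icc a b))
    (hm : m < n) {x : ℝ} (hx : x ∈ Ioo a b) :
    HasDerivAt (iteratedDerivWithin m f (Icc a b))
      (iteratedDerivWithin (m + 1) f (Icc a b) x) x := by
  have hs := uniqueDiffOn_Icc (hx.1.trans hx.2)
  rw [iteratedDerivWithin_succ]
  exact ((hf.differentiableOn_iteratedDerivWithin hm hs) x (Ioo_subset_Icc_self hx))
    |>.hasDerivWithinAt.hasDerivAt (Icc_mem_nhds hx.1 hx.2)

end IteratedDerivWithinIcc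

noncomputable def eulerMaclaurinRemainder (f : ℝ → ℝ) (Z m : ℕ) : ℝ :=
  1 / (m ! : ℝ) *
    ∫ u in (0 : ℝ)..Z, bernoulliFun m (Int.fract u) * iteratedDerivWithin m f (Icc 0 Z) u

section EulerMaclaurinRemainder

variable {f : ℝ → ℝ} {Z : ℕ}

theorem sum_range_eq_add_eulerMaclaurinRemainder_one (hf : ContDiffOn ℝ 1 f (Icc 0 Z)) :
    ∑ ν ∈ range (Z + 1), f ν = (f 0 + f Z) / 2 + (∫ u in (0 : ℝ)..Z, f u)
      + eulerMaclaurinRemainder f Z 1 := by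
  have h := integral_bernoulliFun_one_fract_mul_deriv Z
    (hf.continuousOn_iteratedDerivWithin_Icc (m := 0) (by norm_num))
    (fun x hx => hf.hasDerivAt_iteratedDerivWithin_Icc (m := 0) (by norm_num) hx)
    ((hf.continuousOn_iteratedDerivWithin_Icc (m := 1) le_rfl).intervalIntegrable_of_Icc
      (Nat.cast_nonneg Z))
  simp only [iteratedDerivWithin_zero] at h
  rw [eulerMaclaurinRemainder, h]
  simp

theorem eulerMaclaurinRemainder_eq_sub {n : WithTop ℕ∞} {m : ℕ}
    (hf : ContDiffOn ℝ n f (Icc 0 Z)) (hm : m ≠ 0) (hmn : ((m + 1 : ℕ) : WithTop ℕ∞) ≤ n) :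
    eulerMaclaurinRemainder f Z m =
      bernoulli (m + 1) / ((m + 1) ! : ℝ) * (iteratedDerivWithin m f (Icc 0 Z) Z
        - iteratedDerivWithin m f (Icc 0 Z) 0) - eulerMaclaurinRemainder f Z (m + 1) := by
  have hmn' : (m : WithTop ℕ∞) < n := lt_of_lt_of_le (by exact_mod_cast m.lt_succ_self) hmn
  have h := integral_bernoulliFun_fract_mul_deriv_of_ne_zero Z
    (hf.continuousOn_iteratedDerivWithin_Icc hmn'.le)
    (fun x hx => hf.hasDerivAt_iteratedDerivWithin_Icc hmn' hx)
    ((hf.continuousOn_iteratedDerivWithin_Icc hmn).intervalIntegrable_of_Icc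
      (Nat.cast_nonneg Z)) hm
  rw [eulerMaclaurinRemainder, eulerMaclaurinRemainder, h, factorial_succ]
  push_cast
  field_simp
  ring

theorem eulerMaclaurinRemainder_odd_eq_add {k : ℕ} (hf : ContDiffOn ℝ (2 * k + 3) f (Icc 0 Z)) :
    eulerMaclaurinRemainder f Z (2 * k + 1) =
      bernoulli (2 * k + 2) / ((2 * k + 2) ! : ℝ) *
        (iteratedDerivWithin (2 * k + 1) f (Icc 0 Z) Z
          - iteratedDerivWithin (2 * k + 1) f (Icc 0 Z) 0)
        + eulerMaclaurinRemainder f Z (2 * k + 3) := by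
  rw [eulerMaclaurinRemainder_eq_sub hf (by omega)
      (by exact_mod_cast (by omega : 2 * k + 1 + 1 ≤ 2 * k + 3)),
    eulerMaclaurinRemainder_eq_sub (m := 2 * k + 2) hf (by omega) (by exact_mod_cast le_rfl),
    bernoulli_eq_zero_of_odd (n := 2 * k + 2 + 1) ⟨k + 1, by ring⟩ (by omega)]
  simp

theorem eulerMaclaurinRemainder_one_eq_sum_add {n : ℕ}
    (hf : ContDiffOn ℝ (2 * n + 1) f (Icc 0 Z)) :
    eulerMaclaurinRemainder f Z 1 =
      ∑ j ∈ Finset.Icc 1 n, bernoulli (2 * j) / ((2 * j) ! : ℝ) *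
        (iteratedDerivWithin (2 * j - 1) f (Icc 0 Z) Z
          - iteratedDerivWithin (2 * j - 1) f (Icc 0 Z) 0)
        + eulerMaclaurinRemainder f Z (2 * n + 1) := by
  induction n with
  | zero => simp
  | succ n ih =>
    rw [ih (hf.of_le (by push_cast; gcongr; norm_num)), sum_Icc_succ_top (by omega),
      eulerMaclaurinRemainder_odd_eq_add (by convert hf using 1; push_cast; ring),
      show 2 * (n + 1) - 1 = 2 * n + 1 by omega, ← add_assoc]
    rfl

end EulerMaclaurinRemainder

/-- Generalized Euler summation (Euler–Maclaurin) formula. -/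
theorem euler_maclaurin_summation (N Z : ℕ) (f : ℝ → ℝ)
    (hf : ContDiffOn ℝ (2 * N + 1) f (Set.Icc 0 (Z : ℝ))) :
    ∑ ν ∈ Finset.range (Z + 1), f ν =
      (f 0 + f Z) / 2 + (∫ u in (0:ℝ)..(Z : ℝ), f u)
      + ∑ j ∈ Finset.Icc 1 N,
          ((bernoulli (2 * j) : ℝ) / (Nat.factorial (2 * j)))
            * (iteratedDerivWithin (2 * j - 1) f (Set.Icc 0 (Z : ℝ)) Z
               - iteratedDerivWithin (2 * j - 1) f (Set.Icc 0 (Z : ℝ)) 0)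
      + (1 / (Nat.factorial (2 * N + 1)))
          * ∫ u in (0:ℝ)..(Z : ℝ),
              (∑ j ∈ Finset.range (2 * N + 2),
                (Nat.choose (2 * N + 1) j : ℝ) * (u - ⌊u⌋) ^ j
                  * (bernoulli (2 * N + 1 - j) : ℝ))
                * iteratedDerivWithin (2 * N + 1) f (Set.Icc 0 (Z : ℝ)) u := by
  rw [sum_range_eq_add_eulerMaclaurinRemainder_one (hf.of_le (by simp)),
    eulerMaclaurinRemainder_one_eq_sum_add hf, eulerMaclaurinRemainder, ← add_assoc]
  simp_rw [Int.self_sub_floor, bernoulliFun_eq_sum]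
end

section
/- For any fixed 0 < δ < 1 and 1 < L < 2^{(1-δ)/2}, the set E(L) of α ∈ [0,1) such that (log q_{m+1})/q_m ≥ L^{-m} for infinitely many m ∈ ℕ has Lebesgue measure zero, where q_m are the continued fraction convergent denominators of α. -/
/-!
Since `q_m ≥ F_{m+1} ≥ φ^{m-1}` and `L < √2 < φ`, the quantity `q_m / L^m` eventually
dominates `2 log q_m`. Hence every large `m` with `(log q_{m+1}) / q_m ≥ L^{-m}` satisfies
`q_{m+1} ≥ q_m^2`, and then the convergent `p_m / q_m` approximates `α` to within
`1 / (q_m q_{m+1}) ≤ 1 / q_m^3`. Every `α ∈ E(L)` is therefore Liouville with exponent `3`, and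
such numbers form a null set.
-/

open Real MeasureTheory Filter goldenRatio

namespace GenContFract

variable {K : Type*} [Field K] [LinearOrder K] [FloorRing K]

theorem exists_int_pair_contsAux_eq (v : K) (n : ℕ) :
    ∃ p : Pair ℤ, (GenContFract.of v).contsAux n = p.map (↑) := by
  suffices h : ∀ n, (∃ p : Pair ℤ, (GenContFract.of v).contsAux n = p.map (↑)) ∧
      ∃ p : Pair ℤ, (GenContFract.of v).contsAux (n + 1) = p.map (↑) from (h n).1
  intro n
  induction n with
  | zero =>
    exact ⟨⟨⟨1, 0⟩, by simp [contsAux, Pair.map]⟩,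
      ⟨⌊v⌋, 1⟩, by simp [contsAux, Pair.map]⟩
  | succ n ih =>
    obtain ⟨⟨p, hp⟩, p', hp'⟩ := ih
    refine ⟨⟨p', hp'⟩, ?_⟩
    rcases hs : (GenContFract.of v).s.get? n with _ | gp
    · exact ⟨p', (contsAux_stable_step_of_terminated hs).trans hp'⟩
    · obtain ⟨ha, z, hz⟩ := of_partNum_eq_one_and_exists_int_partDen_eq hs
      refine ⟨⟨z * p'.a + p.a, z * p'.b + p.b⟩, ?_⟩
      rw [contsAux_recurrence hs hp hp', ha, hz]
      simp [Pair.map]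

theorem exists_int_nat_eq_num_den [IsStrictOrderedRing K] (v : K) (n : ℕ) :
    ∃ (a : ℤ) (b : ℕ), (GenContFract.of v).nums n = a ∧ (GenContFract.of v).dens n = b := by
  obtain ⟨⟨a, b⟩, h⟩ := exists_int_pair_contsAux_eq v (n + 1)
  have hnum : (GenContFract.of v).nums n = a := by
    rw [num_eq_conts_a, nth_cont_eq_succ_nth_contAux, h]; rfl
  have hden : (GenContFract.of v).dens n = b := by
    rw [den_eq_conts_b, nth_cont_eq_succ_nth_contAux, h]; rfl
  have hb : 0 ≤ b := by exact_mod_cast hden ▸ zero_le_of_den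
  lift b to ℕ using hb
  exact ⟨a, b, hnum, mod_cast hden⟩

theorem not_terminatedAt_of_irrational {α : ℝ} (hα : Irrational α) (n : ℕ) :
    ¬(GenContFract.of α).TerminatedAt n := fun h =>
  let ⟨q, hq⟩ := (terminates_iff_rat α).1 ⟨n, h⟩
  hα.ne_rat q hq

theorem fib_succ_le_dens_of_irrational {α : ℝ} (hα : Irrational α) (n : ℕ) :
    (Nat.fib (n + 1) : ℝ) ≤ (GenContFract.of α).dens n :=
  succ_nth_fib_le_of_nth_den (Or.inr (not_terminatedAt_of_irrational hα _))

theorem dens_pos_of_irrational {α : ℝ} (hα : Irrational α) (n : ℕ) :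
    0 < (GenContFract.of α).dens n :=
  lt_of_lt_of_le (by simp) (fib_succ_le_dens_of_irrational hα n)

end GenContFract

open GenContFract

theorem Real.goldenRatio_pow_le_mul_fib_succ (n : ℕ) : φ ^ n ≤ φ * Nat.fib (n + 1) := by
  have hfib : (Nat.fib n : ℝ) ≤ Nat.fib (n + 1) := mod_cast Nat.fib_le_fib_succ
  have h : φ * φ ^ n = φ * Nat.fib (n + 1) + Nat.fib n := by
    rw [← pow_succ', goldenRatio_mul_fib_succ_add_fib]
  refine le_of_mul_le_mul_left ?_ goldenRatio_pos
  nlinarith [goldenRatio_sq]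

theorem Real.sqrt_two_lt_goldenRatio : √2 < φ := by
  rw [goldenRatio, sqrt_lt' (by positivity)]
  nlinarith [sq_sqrt (show (0 : ℝ) ≤ 5 by norm_num), sqrt_nonneg 5]

theorem eventually_mul_log_le_div_pow {k c s L : ℝ} (hk : 0 < k) (hc : 0 < c) (hL : 1 < L)
    (hLs : L < s) :
    ∀ᶠ m : ℕ in atTop, ∀ x, c * s ^ m ≤ x → k * log x ≤ x / L ^ m := by
  have hs : 1 < s := hL.trans hLs
  set θ := log L / log s
  have hθ0 : 0 < θ := div_pos (log_pos hL) (log_pos hs)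
  have hθ1 : θ < 1 := (div_lt_one (log_pos hs)).2 (log_lt_log (by linarith) hLs)
  have hLθ : L = s ^ θ := by
    rw [rpow_def_of_pos (by linarith), mul_div_cancel₀ _ (log_pos hs).ne', exp_log (by linarith)]
  obtain ⟨X, hX⟩ := eventually_atTop.1
    ((isLittleO_log_rpow_atTop (sub_pos.2 hθ1)).bound (div_pos (rpow_pos_of_pos hc θ) hk))
  filter_upwards [((tendsto_pow_atTop_atTop_of_one_lt hs).const_mul_atTop hc).eventually_ge_atTop
    (max X 1)] with m hm x hx
  have hx1 : 1 ≤ x := (le_max_right _ _).trans (hm.trans hx)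
  have hx0 : 0 < x := by linarith
  have hLm : L ^ m ≤ (x / c) ^ θ := by
    rw [hLθ, ← rpow_natCast, ← rpow_mul (by linarith), mul_comm, rpow_mul (by linarith),
      rpow_natCast]
    exact rpow_le_rpow (by positivity) ((le_div_iff₀' hc).2 hx) hθ0.le
  have hlog : log x ≤ c ^ θ / k * x ^ (1 - θ) := by
    have := hX x ((le_max_left _ _).trans (hm.trans hx))
    rwa [norm_of_nonneg (log_nonneg hx1), norm_of_nonneg (by positivity)] at this
  calc k * log x ≤ c ^ θ * x ^ (1 - θ) := by
        rwa [div_mul_eq_mul_div, le_div_iff₀' hk] at hlog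
    _ = x / (x / c) ^ θ := by
        rw [div_rpow hx0.le hc.le, rpow_sub hx0, rpow_one]
        field_simp
    _ ≤ x / L ^ m := div_le_div_of_nonneg_left hx0.le (by positivity) hLm

theorem Irrational.liouvilleWith_of_frequently_rpow_dens_le {α p : ℝ} (hα : Irrational α)
    (h : ∃ᶠ m in atTop,
      (GenContFract.of α).dens m ^ (p - 1) ≤ (GenContFract.of α).dens (m + 1)) :
    LiouvilleWith p α := by
  choose a b hab using exists_int_nat_eq_num_den α
  have hb : ∀ m, (b m : ℝ) = (GenContFract.of α).dens m := fun m => (hab m).2.symm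
  have hb_ge : ∀ m, m ≤ b m := fun m => by
    have : Nat.fib (m + 1) ≤ b m := by
      exact_mod_cast (hb m).symm ▸ fib_succ_le_dens_of_irrational hα m
    linarith [Nat.le_fib_add_one (m + 1)]
  refine ⟨2, (tendsto_atTop_mono hb_ge tendsto_id).frequently
    (h.mono fun m hm => ⟨a m, ?_, ?_⟩)⟩
  · simpa using hα.ne_rat (a m / b m)
  · have hq := dens_pos_of_irrational hα m
    calc |α - a m / b m| = |α - (GenContFract.of α).convs m| := by
          rw [conv_eq_num_div_den, (hab m).1, hb]
      _ ≤ 1 / ((GenContFract.of α).dens m * (GenContFract.of α).dens (m + 1)) :=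
          abs_sub_convs_le (not_terminatedAt_of_irrational hα m)
      _ ≤ 1 / ((GenContFract.of α).dens m * (GenContFract.of α).dens m ^ (p - 1)) := by
          gcongr
      _ = 1 / (b m : ℝ) ^ p := by rw [hb, mul_comm, ← rpow_add_one hq.ne', sub_add_cancel]
      _ < 2 / (b m : ℝ) ^ p := by
          rw [hb]; exact div_lt_div_of_pos_right one_lt_two (rpow_pos_of_pos hq p)

theorem Irrational.liouvilleWith_three_of_infinite_setOf_inv_pow_le {α L : ℝ}
    (hα : Irrational α) (hL : 1 < L) (hLφ : L < φ)
    (h : {m : ℕ | (L ^ m)⁻¹ ≤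
      log ((GenContFract.of α).dens (m + 1)) / (GenContFract.of α).dens m}.Infinite) :
    LiouvilleWith 3 α := by
  refine hα.liouvilleWith_of_frequently_rpow_dens_le <|
    ((Nat.frequently_atTop_iff_infinite.2 h).and_eventually <|
      eventually_mul_log_le_div_pow two_pos (inv_pos.2 goldenRatio_pos) hL hLφ).mono
    fun m ⟨hm, hgrowth⟩ => ?_
  have hq := dens_pos_of_irrational hα m
  have hq' := dens_pos_of_irrational hα (m + 1)
  have hφq : φ⁻¹ * φ ^ m ≤ (GenContFract.of α).dens m :=
    ((inv_mul_le_iff₀ goldenRatio_pos).2 (goldenRatio_pow_le_mul_fib_succ m)).trans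
      (fib_succ_le_dens_of_irrational hα m)
  have hlog :
      2 * log ((GenContFract.of α).dens m) ≤ log ((GenContFract.of α).dens (m + 1)) := by
    rw [le_div_iff₀ hq] at hm
    exact (hgrowth _ hφq).trans (by rwa [div_eq_inv_mul])
  rw [show (3 : ℝ) - 1 = (2 : ℕ) by norm_num, rpow_natCast]
  rw [← Nat.cast_ofNat, ← log_pow] at hlog
  exact (log_le_log_iff (by positivity) hq').1 hlog

theorem exceptional_set_measure_zero_general (δ L : ℝ) (hδ0 : 0 < δ)
    (hL1 : 1 < L) (hL2 : L < (2 : ℝ) ^ ((1 - δ) / 2)) :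
    MeasureTheory.volume
      {α ∈ Set.Ico (0:ℝ) 1 | Irrational α ∧
        {m : ℕ | (L ^ m)⁻¹ ≤
          Real.log ((GenContFract.of α).dens (m + 1)) / (GenContFract.of α).dens m}.Infinite}
      = 0 := by
  have hLφ : L < φ :=
    calc L < 2 ^ ((1 - δ) / 2) := hL2
      _ ≤ 2 ^ (1 / 2 : ℝ) := rpow_le_rpow_of_exponent_le one_le_two (by linarith)
      _ = √2 := (sqrt_eq_rpow 2).symm
      _ < φ := sqrt_two_lt_goldenRatio
  refine measure_mono_null (fun α ⟨_, hα, h⟩ => ?_) (ae_iff.1 ae_not_liouvilleWith)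
  exact fun hα3 => hα3 3 (by norm_num)
    (hα.liouvilleWith_three_of_infinite_setOf_inv_pow_le hL1 hLφ h)

/-- For `0 < δ < 1` and `1 < L < 2^{(1-δ)/2}`, the set of `α ∈ [0,1)` whose continued
fraction convergent denominators `q_m` satisfy `(log q_{m+1})/q_m ≥ L^{-m}` for infinitely
many `m` has Lebesgue measure zero. -/
theorem exceptional_set_measure_zero (δ L : ℝ) (hδ0 : 0 < δ) (hδ1 : δ < 1)
    (hL1 : 1 < L) (hL2 : L < (2 : ℝ) ^ ((1 - δ) / 2)) :
    MeasureTheory.volume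
      {α ∈ Set.Ico (0:ℝ) 1 | Irrational α ∧
        {m : ℕ | (L ^ m)⁻¹ ≤
          Real.log ((GenContFract.of α).dens (m + 1)) / (GenContFract.of α).dens m}.Infinite}
      = 0 :=
  exceptional_set_measure_zero_general δ L hδ0 hL1 hL2
end
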